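/- Define cφ3'(n) by ∑_{n≥0} cφ3'(n) q^n = 9 q ∏_{n≥1} (1-q^{9n})^3 / ((1-q^{3n})(1-q^n)^3). Assuming a(15n+6) ≡ 0 (mod 5) and a(15n+12) ≡ 0 (mod 5) for all n ≥ 0 (where ∑ a(n) q^n = ∏_{n≥1}(1-q^{3n})^{-1}(1-q^n)^{-3}), one has cφ3'(45n+22) ≡ 0 (mod 5) for all n ≥ 0. -/

import Mathlib

open PowerSeries Finset

/-- Coefficients of `∏_{k≥1} 1/((1-q^{3k})(1-q^k)^3)` (truncated product suffices). -/
noncomputable def a (n : ℕ) : ℤ :=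
  PowerSeries.coeff (R := ℤ) n (PowerSeries.invOfUnit
    (∏ k ∈ Finset.Icc 1 n, ((1 - PowerSeries.X ^ (3 * k)) * (1 - PowerSeries.X ^ k) ^ 3)) 1)

/-- `a` extended to the integers by `0` on negative arguments. -/
noncomputable def aext (j : ℤ) : ℤ := if 0 ≤ j then a j.toNat else 0

/-- Coefficients of `9 q ∏_{k≥1} (1-q^{9k})^3/((1-q^{3k})(1-q^k)^3)`
(truncated products suffice for the coefficient of `q^n`). -/
noncomputable def cphi3' (n : ℕ) : ℤ :=
  PowerSeries.coeff (R := ℤ) n ((9 : ℤ⟦X⟧) * PowerSeries.X *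
    (∏ k ∈ Finset.Icc 1 n, (1 - PowerSeries.X ^ (9 * k)) ^ 3) *
    PowerSeries.invOfUnit
      (∏ k ∈ Finset.Icc 1 n, ((1 - PowerSeries.X ^ (3 * k)) * (1 - PowerSeries.X ^ k) ^ 3)) 1)

/-!
Jacobi's identity `(q;q)_∞^3 = ∑_{j ≥ 0} (-1)^j (2j+1) q^{j(j+1)/2}` with `q = X^9` turns
`cφ3'(m+1)` into `9 ∑_j (-1)^j (2j+1) a(m - 9 j(j+1)/2)`. For `m = 45n+21` the index
`m - 9 j(j+1)/2` is `≡ 6` or `≡ 12 (mod 15)` according as `j(j+1)/2 ≡ 0` or `≡ 1 (mod 5)`, and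
the only remaining case is `j ≡ 2 (mod 5)`, where `5 ∣ 2j+1`.

Jacobi's identity is only needed modulo `q^{n+1}`. There it follows from the finite identity
`∑_{j ≤ n} (-1)^j (2j+1) q^{j(j+1)/2} [2n+1 choose n-j]_q = (q;q)_n^2`, proved by telescoping
in `n`, together with `(q;q)_n [2n+1 choose n-j]_q ≡ 1 (mod q^{n+1-j})`.
-/

lemma prod_Icc_one_eq_mul_prod_Ioc {M : Type*} [CommMonoid M] (f : ℕ → M) {k n : ℕ} (h : k ≤ n) :
    ∏ i ∈ Icc 1 n, f i = (∏ i ∈ Icc 1 k, f i) * ∏ i ∈ Ioc k n, f i := by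
  have hIoc (n : ℕ) : Icc 1 n = Ioc 0 n := Icc_add_one_left_eq_Ioc 0 n
  rw [hIoc, hIoc, prod_Ioc_consecutive _ k.zero_le h]

section Divisibility

variable {R : Type*} [CommRing R]

lemma dvd_mul_sub_one {d a b : R} (ha : d ∣ a - 1) (hb : d ∣ b - 1) : d ∣ a * b - 1 := by
  rw [show a * b - 1 = a * (b - 1) + (a - 1) by ring]
  exact (hb.mul_left a).add ha

lemma dvd_prod_sub_one {ι : Type*} {d : R} {s : Finset ι} {f : ι → R} (h : ∀ i ∈ s, d ∣ f i - 1) :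
    d ∣ ∏ i ∈ s, f i - 1 := by
  classical
  induction s using Finset.induction_on with
  | empty => simp
  | insert i s hi ih =>
    rw [prod_insert hi]
    exact dvd_mul_sub_one (h i (mem_insert_self i s)) (ih fun k hk => h k (mem_insert_of_mem hk))

end Divisibility

section QBinomial

variable {R : Type*} [CommRing R] (q : R)

/-- The Gaussian binomial `[m choose k]_q`, extended by `0` to `k ∉ [0, m]`. -/
def qBinom : ℕ → ℤ → R
  | 0, k => if k = 0 then 1 else 0
  | m + 1, k => qBinom m k + q ^ (m + 1 - k).toNat * qBinom m (k - 1)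

lemma qBinom_succ (m : ℕ) (k : ℤ) :
    qBinom q (m + 1) k = qBinom q m k + q ^ (m + 1 - k).toNat * qBinom q m (k - 1) := rfl

lemma qBinom_of_neg (m : ℕ) {k : ℤ} (hk : k < 0) : qBinom q m k = 0 := by
  induction m generalizing k with
  | zero => simp [qBinom, hk.ne]
  | succ m ih => rw [qBinom_succ, ih hk, ih (by omega), mul_zero, add_zero]

lemma qBinom_of_lt {m : ℕ} {k : ℤ} (hk : m < k) : qBinom q m k = 0 := by
  induction m generalizing k with
  | zero => simp [qBinom]; omega
  | succ m ih => rw [qBinom_succ, ih (by omega), ih (by omega), mul_zero, add_zero]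

@[simp]
lemma qBinom_zero_right (m : ℕ) : qBinom q m 0 = 1 := by
  induction m with
  | zero => simp [qBinom]
  | succ m ih => rw [qBinom_succ, ih, qBinom_of_neg q m (by omega), mul_zero, add_zero]

lemma qBinom_succ' (m : ℕ) (k : ℤ) :
    qBinom q (m + 1) k = q ^ k.toNat * qBinom q m k + qBinom q m (k - 1) := by
  induction m generalizing k with
  | zero =>
    rcases lt_trichotomy k 0 with hk | rfl | hk
    · simp [qBinom, hk.ne, show k - 1 ≠ 0 by omega]
    · simp [qBinom]
    · obtain rfl | hk := eq_or_lt_of_le (show 1 ≤ k by omega)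
      · simp [qBinom]
      · simp [qBinom, show k ≠ 0 by omega, show k - 1 ≠ 0 by omega]
  | succ m ih =>
    have hexp : q ^ (↑(m + 1) + 1 - k).toNat * q ^ (k - 1).toNat * qBinom q m (k - 1)
        = q ^ k.toNat * q ^ (↑m + 1 - k).toNat * qBinom q m (k - 1) := by
      by_cases hk : 1 ≤ k ∧ k ≤ m + 1
      · rw [← pow_add, ← pow_add]; congr 2; omega
      · rcases not_and_or.mp hk with hk | hk
        · simp [qBinom_of_neg q m (show k - 1 < 0 by omega)]
        · simp [qBinom_of_lt q (show (m : ℤ) < k - 1 by omega)]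
    have hsucc := qBinom_succ q m (k - 1)
    rw [show (m : ℤ) + 1 - (k - 1) = ↑(m + 1) + 1 - k by push_cast; ring] at hsucc
    rw [qBinom_succ q (m + 1) k]
    linear_combination ih k + q ^ (↑(m + 1) + 1 - k).toNat * ih (k - 1)
      - q ^ k.toNat * qBinom_succ q m k - hsucc + hexp

lemma qBinom_symm (m : ℕ) (k : ℤ) : qBinom q m (m - k) = qBinom q m k := by
  induction m generalizing k with
  | zero => simp [qBinom, neg_eq_zero]
  | succ m ih =>
    rw [qBinom_succ, qBinom_succ', show ((m + 1 : ℕ) : ℤ) - k = m - (k - 1) by push_cast; ring,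
      show (m : ℤ) - (k - 1) - 1 = m - k by ring, show (m : ℤ) + 1 - (m - (k - 1)) = k by ring,
      ih, ih]
    ring

lemma one_sub_pow_mul_qBinom (m : ℕ) (k : ℤ) :
    (1 - q ^ (k + 1).toNat) * qBinom q m (k + 1) = (1 - q ^ (m - k).toNat) * qBinom q m k := by
  have h := qBinom_succ q m (k + 1)
  rw [qBinom_succ', add_sub_cancel_right, show (m : ℤ) + 1 - (k + 1) = m - k by ring] at h
  linear_combination -h

def qPochhammer (n : ℕ) : R := ∏ i ∈ Icc 1 n, (1 - q ^ i)

lemma qPochhammer_succ (n : ℕ) : qPochhammer q (n + 1) = qPochhammer q n * (1 - q ^ (n + 1)) :=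
  prod_Icc_succ_top (by omega) _

lemma qPochhammer_mul_qBinom {m k : ℕ} (h : k ≤ m) :
    qPochhammer q k * qBinom q m k = ∏ i ∈ Icc (m - k + 1) m, (1 - q ^ i) := by
  induction m generalizing k with
  | zero =>
    obtain rfl : k = 0 := by omega
    simp [qPochhammer]
  | succ m ih =>
    cases k with
    | zero => simp [qPochhammer]
    | succ k =>
      have hcontig := one_sub_pow_mul_qBinom q m k
      rw [show ((m : ℤ) - k).toNat = m - k by omega,
        show ((k : ℤ) + 1).toNat = k + 1 by omega] at hcontig
      rw [qPochhammer_succ, Nat.cast_succ, qBinom_succ, show (m : ℤ) + 1 - (k + 1) = m - k by ring,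
        show ((m : ℤ) - k).toNat = m - k by omega, add_sub_cancel_right, Nat.add_sub_add_right,
        prod_Icc_succ_top (by omega), ← ih (by omega)]
      have hpow : q ^ (m - k) * q ^ (k + 1) = q ^ (m + 1) := by rw [← pow_add]; congr 1; omega
      linear_combination qPochhammer q k * hcontig - qPochhammer q k * qBinom q m k * hpow

def jacobiTerm (n j : ℕ) : R :=
  (-1) ^ j * (2 * j + 1) * q ^ (j + 1).choose 2 * qBinom q (2 * n + 1) (n - j)

/-- Creative-telescoping certificate of the recurrence `jacobiTerm_succ`. -/
def jacobiCertificate (n j : ℕ) : R :=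
  (-1) ^ j * q ^ (j.choose 2 + n + 1) * ((2 * j + 1) * qBinom q (2 * n + 1) (n + 1 - j)
    + (2 * j - 1) * q ^ j * qBinom q (2 * n + 1) (n - j))

lemma jacobiTerm_succ_of_le {n j : ℕ} (hj : j ≤ n) :
    jacobiTerm q (n + 1) j = (1 - q ^ (n + 1)) ^ 2 * jacobiTerm q n j
      + (jacobiCertificate q n j - jacobiCertificate q n (j + 1)) := by
  obtain ⟨d, rfl⟩ := Nat.exists_eq_add_of_le hj
  set m := 2 * (j + d) + 1
  have hp1 := qBinom_succ q (m + 1) (d + 1)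
  have hp2 := qBinom_succ q m (d + 1)
  have hp3 := qBinom_succ q m d
  have hc1 := one_sub_pow_mul_qBinom q m d
  have hc2 := one_sub_pow_mul_qBinom q m (d - 1)
  rw [show ((m + 1 : ℕ) : ℤ) + 1 - (d + 1) = ↑(2 * j + d + 2) by push_cast [m]; ring] at hp1
  rw [show (m : ℤ) + 1 - (d + 1) = ↑(2 * j + d + 1) by push_cast [m]; ring] at hp2
  rw [show (m : ℤ) + 1 - d = ↑(2 * j + d + 2) by push_cast [m]; ring] at hp3
  rw [show (m : ℤ) - d = ↑(2 * j + d + 1) by push_cast [m]; ring] at hc1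
  rw [sub_add_cancel, show (m : ℤ) - (d - 1) = ↑(2 * j + d + 2) by push_cast [m]; ring] at hc2
  simp only [Int.toNat_natCast, add_sub_cancel_right, Int.toNat_natCast_add_one]
    at hp1 hp2 hp3 hc1 hc2
  have hT : (j + 1).choose 2 = j.choose 2 + j := by
    rw [Nat.choose_succ_succ, Nat.choose_one_right, add_comm]
  simp only [jacobiTerm, jacobiCertificate, hT, show 2 * (j + d + 1) + 1 = m + 1 + 1 by omega,
    show ((j + d + 1 : ℕ) : ℤ) - j = d + 1 by push_cast; ring,
    show ((j + d : ℕ) : ℤ) - j = d by push_cast; ring,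
    show ((j + d : ℕ) : ℤ) + 1 - j = d + 1 by push_cast; ring,
    show ((j + d : ℕ) : ℤ) + 1 - (j + 1 : ℕ) = d by push_cast; ring,
    show ((j + d : ℕ) : ℤ) - (j + 1 : ℕ) = d - 1 by push_cast; ring]
  rw [hp1, hp2, hp3]
  push_cast
  linear_combination (-1) ^ j * q ^ (j.choose 2 + j) * (2 * (j : R) + 1) * hc1
    + (-1) ^ j * q ^ (j.choose 2 + j) * (2 * (j : R) + 1) * q ^ (2 * j + d + 2) * hc2

lemma jacobiTerm_of_lt {n j : ℕ} (h : n < j) : jacobiTerm q n j = 0 := by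
  rw [jacobiTerm, qBinom_of_neg q _ (by omega), mul_zero]

lemma jacobiCertificate_zero (n : ℕ) : jacobiCertificate q n 0 = 0 := by
  have hsymm := qBinom_symm q (2 * n + 1) n
  rw [show ((2 * n + 1 : ℕ) : ℤ) - n = n + 1 by push_cast; ring] at hsymm
  simp [jacobiCertificate, hsymm]

lemma jacobiCertificate_of_lt {n j : ℕ} (h : n + 1 < j) : jacobiCertificate q n j = 0 := by
  rw [jacobiCertificate, qBinom_of_neg q _ (by omega), qBinom_of_neg q _ (by omega)]
  ring

lemma jacobiTerm_succ {n j : ℕ} (hj : j ≤ n + 1) :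
    jacobiTerm q (n + 1) j = (1 - q ^ (n + 1)) ^ 2 * jacobiTerm q n j
      + (jacobiCertificate q n j - jacobiCertificate q n (j + 1)) := by
  rcases hj.lt_or_eq with hj | rfl
  · exact jacobiTerm_succ_of_le q (Nat.lt_succ_iff.mp hj)
  rw [jacobiTerm_of_lt q n.lt_add_one, jacobiCertificate_of_lt q (n + 1).lt_add_one, jacobiTerm,
    jacobiCertificate, sub_self, show (n : ℤ) + 1 - (n + 1 : ℕ) = 0 by push_cast; ring,
    qBinom_of_neg q _ (show (n : ℤ) - (n + 1 : ℕ) < 0 by omega), Nat.choose_succ_succ',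
    Nat.choose_one_right]
  simp only [qBinom_zero_right]
  ring

lemma sum_jacobiTerm (n : ℕ) : ∑ j ∈ range (n + 1), jacobiTerm q n j = qPochhammer q n ^ 2 := by
  induction n with
  | zero => simp [jacobiTerm, qPochhammer]
  | succ n ih =>
    rw [sum_congr rfl fun j hj => jacobiTerm_succ q (by simp at hj; omega), sum_add_distrib,
      ← mul_sum, sum_range_sub', jacobiCertificate_zero,
      jacobiCertificate_of_lt q (n + 1).lt_add_one, sum_range_succ, ih, jacobiTerm_of_lt q n.lt_add_one, qPochhammer_succ]
    ring

lemma pow_dvd_prod_one_sub_pow_sub_one {a : ℕ} {s : Finset ℕ} (h : ∀ i ∈ s, a ≤ i) :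
    q ^ a ∣ ∏ i ∈ s, (1 - q ^ i) - 1 :=
  dvd_prod_sub_one fun i hi => by
    rw [sub_sub_cancel_left]
    exact (pow_dvd_pow q (h i hi)).neg_right

lemma pow_dvd_qPochhammer_mul_qBinom_sub_one {k n m : ℕ} (hkn : k ≤ n) (hkm : 2 * k ≤ m) :
    q ^ (k + 1) ∣ qPochhammer q n * qBinom q m k - 1 := by
  rw [qPochhammer, prod_Icc_one_eq_mul_prod_Ioc _ hkn, mul_right_comm, ← qPochhammer,
    qPochhammer_mul_qBinom q (by omega)]
  refine dvd_mul_sub_one (pow_dvd_prod_one_sub_pow_sub_one q fun i hi => ?_)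
    (pow_dvd_prod_one_sub_pow_sub_one q fun i hi => ?_)
  · simp only [mem_Icc] at hi; omega
  · simp only [mem_Ioc] at hi; omega

theorem pow_dvd_qPochhammer_pow_three_sub (n : ℕ) :
    q ^ (n + 1) ∣
      qPochhammer q n ^ 3 - ∑ j ∈ range (n + 1), (-1) ^ j * (2 * j + 1) * q ^ (j + 1).choose 2 := by
  have hsum :
      qPochhammer q n ^ 3 - ∑ j ∈ range (n + 1), (-1) ^ j * (2 * j + 1) * q ^ (j + 1).choose 2
      = ∑ j ∈ range (n + 1), (-1) ^ j * (2 * j + 1) * q ^ (j + 1).choose 2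
          * (qPochhammer q n * qBinom q (2 * n + 1) (n - j) - 1) := by
    rw [pow_succ', ← sum_jacobiTerm, mul_sum, ← sum_sub_distrib]
    exact sum_congr rfl fun j _ => by rw [jacobiTerm]; ring
  rw [hsum]
  refine dvd_sum fun j hj => ?_
  have hj : j ≤ n := Nat.lt_succ_iff.mp (mem_range.mp hj)
  have hdvd := pow_dvd_qPochhammer_mul_qBinom_sub_one q (k := n - j) (n := n) (m := 2 * n + 1)
    (by omega) (by omega)
  rw [Nat.cast_sub hj] at hdvd
  have hTj : j ≤ (j + 1).choose 2 := by rw [Nat.choose_succ_succ', Nat.choose_one_right]; omega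
  have hpow : q ^ (n + 1) ∣ q ^ (j + 1).choose 2 * q ^ (n - j + 1) := by
    rw [← pow_add]
    exact pow_dvd_pow q (by omega)
  rw [mul_assoc]
  exact hpow.trans ((mul_dvd_mul_left _ hdvd).mul_left _)

end QBinomial

section PowerSeriesCongruences

variable {R : Type*} [CommRing R]

lemma X_pow_dvd_invOfUnit_sub_invOfUnit {f g : R⟦X⟧} {u : Rˣ} {k : ℕ} (hf : constantCoeff f = u)
    (hg : constantCoeff g = u) (h : X ^ k ∣ f - g) : X ^ k ∣ invOfUnit f u - invOfUnit g u := by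
  have hinv : invOfUnit f u - invOfUnit g u = invOfUnit f u * invOfUnit g u * -(f - g) := by
    linear_combination
      -(invOfUnit f u) * mul_invOfUnit g u hg + invOfUnit g u * mul_invOfUnit f u hf
  rw [hinv]
  exact h.neg_right.mul_left _

lemma X_pow_dvd_prod_Icc_sub_prod_Icc {f : ℕ → R⟦X⟧} (hf : ∀ k, X ^ k ∣ f k - 1) {m M : ℕ}
    (h : m ≤ M) :
    X ^ (m + 1) ∣ ∏ k ∈ Icc 1 M, f k - ∏ k ∈ Icc 1 m, f k := by
  rw [prod_Icc_one_eq_mul_prod_Ioc f h, ← mul_sub_one]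
  refine (dvd_prod_sub_one fun k hk => ?_).mul_left _
  exact (pow_dvd_pow X (mem_Ioc.mp hk).1).trans (hf k)

end PowerSeriesCongruences

noncomputable def aDenom (M : ℕ) : ℤ⟦X⟧ := ∏ k ∈ Icc 1 M, ((1 - X ^ (3 * k)) * (1 - X ^ k) ^ 3)

lemma X_pow_dvd_aDenom_factor_sub_one (k : ℕ) :
    (X : ℤ⟦X⟧) ^ k ∣ (1 - X ^ (3 * k)) * (1 - X ^ k) ^ 3 - 1 := by
  have h1 : (X : ℤ⟦X⟧) ^ k ∣ (1 - X ^ k) - 1 := by rw [sub_sub_cancel_left, dvd_neg]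
  have h3 : (X : ℤ⟦X⟧) ^ k ∣ (1 - X ^ (3 * k)) - 1 := by
    rw [sub_sub_cancel_left, dvd_neg]
    exact pow_dvd_pow X (by omega)
  exact dvd_mul_sub_one h3 (by simpa using h1.trans (sub_dvd_pow_sub_pow _ 1 3))

lemma X_pow_dvd_aDenom_sub_aDenom {m M : ℕ} (h : m ≤ M) : X ^ (m + 1) ∣ aDenom M - aDenom m :=
  X_pow_dvd_prod_Icc_sub_prod_Icc X_pow_dvd_aDenom_factor_sub_one h

lemma constantCoeff_aDenom (M : ℕ) : constantCoeff (aDenom M) = ((1 : ℤˣ) : ℤ) := by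
  have h := X_pow_dvd_aDenom_sub_aDenom M.zero_le
  rw [zero_add, pow_one, X_dvd_iff, map_sub, sub_eq_zero, show aDenom 0 = 1 by simp [aDenom]] at h
  rw [h, map_one, Units.val_one]

lemma coeff_invOfUnit_aDenom {m M : ℕ} (h : m ≤ M) : coeff m (invOfUnit (aDenom M) 1) = a m := by
  have hdvd := X_pow_dvd_invOfUnit_sub_invOfUnit (constantCoeff_aDenom M) (constantCoeff_aDenom m)
    (X_pow_dvd_aDenom_sub_aDenom h)
  change _ = coeff m (invOfUnit (aDenom m) 1)
  rw [← sub_eq_zero, ← map_sub]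
  exact X_pow_dvd_iff.mp hdvd m m.lt_add_one

lemma coeff_X_pow_mul_invOfUnit_aDenom {m M e : ℕ} (h : m ≤ M) :
    coeff m (X ^ e * invOfUnit (aDenom M) 1) = aext (m - e) := by
  rw [coeff_X_pow_mul', aext]
  by_cases he : e ≤ m
  · rw [if_pos he, if_pos (by omega), coeff_invOfUnit_aDenom (by omega)]
    congr
    omega
  · rw [if_neg he, if_neg (by omega)]

lemma cphi3'_succ (m : ℕ) :
    cphi3' (m + 1) =
      9 * ∑ j ∈ range (m + 2), (-1) ^ j * (2 * j + 1) * aext (m - 9 * (j + 1).choose 2) := by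
  set I := invOfUnit (aDenom (m + 1)) 1
  set J := ∑ j ∈ range (m + 2), (-1) ^ j * (2 * j + 1) * ((X : ℤ⟦X⟧) ^ 9) ^ (j + 1).choose 2
  have hprod :
      ∏ k ∈ Icc 1 (m + 1), (1 - X ^ (9 * k)) ^ 3 = qPochhammer ((X : ℤ⟦X⟧) ^ 9) (m + 1) ^ 3 := by
    simp only [qPochhammer, ← prod_pow, ← pow_mul]
  have hcphi : cphi3' (m + 1) = 9 * coeff m (qPochhammer ((X : ℤ⟦X⟧) ^ 9) (m + 1) ^ 3 * I) := by
    change coeff (m + 1) (9 * X * _ * I) = _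
    rw [hprod, ← map_ofNat C 9, mul_assoc, mul_assoc, coeff_C_mul, coeff_succ_X_mul]
  have hjacobi : coeff m (qPochhammer ((X : ℤ⟦X⟧) ^ 9) (m + 1) ^ 3 * I) = coeff m (J * I) := by
    have hdvd : X ^ (m + 1) ∣ (qPochhammer ((X : ℤ⟦X⟧) ^ 9) (m + 1) ^ 3 - J) * I := by
      refine (pow_dvd_pow X (by omega : m + 1 ≤ 9 * (m + 1 + 1))).trans ?_
      rw [pow_mul]
      exact (pow_dvd_qPochhammer_pow_three_sub _ (m + 1)).mul_right I
    rw [← sub_eq_zero, ← map_sub, ← sub_mul]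
    exact X_pow_dvd_iff.mp hdvd m m.lt_add_one
  rw [hcphi, hjacobi, sum_mul, map_sum]
  congr 1
  refine sum_congr rfl fun j _ => ?_
  have hC : ((-1) ^ j * (2 * j + 1) : ℤ⟦X⟧) = C ((-1) ^ j * (2 * j + 1) : ℤ) := by simp
  rw [hC, mul_assoc, coeff_C_mul, ← pow_mul, coeff_X_pow_mul_invOfUnit_aDenom m.le_succ]
  push_cast
  rfl

lemma choose_two_mod_five (j : ℕ) :
    5 ∣ 2 * j + 1 ∨ (j + 1).choose 2 % 5 = 0 ∨ (j + 1).choose 2 % 5 = 1 := by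
  have htwice : 2 * (j + 1).choose 2 = (j + 1) * j := by
    rw [Nat.choose_two_right, Nat.add_sub_cancel, mul_comm (j + 1)]
    exact Nat.mul_div_cancel' (Nat.even_mul_succ_self j).two_dvd
  have hmod : (j + 1) * j % 5 = (j % 5 + 1) % 5 * (j % 5) % 5 := by
    rw [Nat.mul_mod, Nat.add_mod, Nat.one_mod]
  have hr : j % 5 < 5 := Nat.mod_lt j (by norm_num)
  interval_cases hj : j % 5 <;> simp at hmod <;> omega

lemma five_dvd_aext (ha6 : ∀ n : ℕ, a (15 * n + 6) ≡ 0 [ZMOD 5])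
    (ha12 : ∀ n : ℕ, a (15 * n + 12) ≡ 0 [ZMOD 5]) {i : ℤ} (hi : i % 15 = 6 ∨ i % 15 = 12) :
    5 ∣ aext i := by
  rw [aext]
  split_ifs with hnonneg
  · rw [← Int.modEq_zero_iff_dvd]
    rcases hi with hi | hi
    · simpa [show 15 * (i.toNat / 15) + 6 = i.toNat by omega] using ha6 (i.toNat / 15)
    · simpa [show 15 * (i.toNat / 15) + 12 = i.toNat by omega] using ha12 (i.toNat / 15)
  · exact dvd_zero 5

theorem cphi3'_cong_22
    (ha6 : ∀ n : ℕ, a (15 * n + 6) ≡ 0 [ZMOD 5])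
    (ha12 : ∀ n : ℕ, a (15 * n + 12) ≡ 0 [ZMOD 5]) :
    ∀ n : ℕ, cphi3' (45 * n + 22) ≡ 0 [ZMOD 5] := by
  intro n
  rw [Int.modEq_zero_iff_dvd, cphi3'_succ]
  refine dvd_mul_of_dvd_right (dvd_sum fun j _ => ?_) _
  rcases choose_two_mod_five j with h | h | h
  · exact (dvd_mul_of_dvd_right (by exact_mod_cast h) _).mul_right _
  · exact dvd_mul_of_dvd_right (five_dvd_aext ha6 ha12 (by omega)) _
  · exact dvd_mul_of_dvd_right (five_dvd_aext ha6 ha12 (by omega)) _
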